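/- There exists a constant C > 0, depending only on δ, β_S, β_Ω, such that for all h ∈ (0,1/4) the test field satisfies the L² bound ∫_{Ω_{h,δ}} |φ̃_h(x)|² dx ≤ C². -/

import Mathlib

/-!
Write `A = h + γ_s(r)` and `t = z / A`. The cubic `Φ` depends on `h` and `r` only through `A`,
so `Ψ(r, z) = F(A, t)` for a function `F` that is smooth near the box `[0, 2] × [0, 1]`, which
contains every `(A, t)` coming from the cusp; `|F|` and `‖DF‖` are therefore bounded there by a
constant `M` independent of `h`. By the chain rule `∂_zΨ = ∂_tF / A` and
`(1/2r) ∂_r(r²Ψ) = F + (r/2) DF(γ_s', -t γ_s'/A)`. Since `r² ≤ 2γ_s(r) ≤ 2A` and `γ_s'(r) ≤ 2r`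
for `r ≤ 1/2`, the integrand is at most `19 M² / A`. Integrating `1 / A` over the fibre
`0 < z < A` gives `1`, so the integral is at most `19 M²` times the area of the disc `r < δ`.
-/

open Real MeasureTheory intervalIntegral

noncomputable section

/-- `γ_s(r) = 1 - √(1 - r²)`. -/
def gam (r : ℝ) : ℝ := 1 - Real.sqrt (1 - r ^ 2)

/-- `α_P(r) = (h + γ_s(r)) / β_Ω`. -/
def aP (βΩ h r : ℝ) : ℝ := (h + gam r) / βΩ

/-- `α_S(r) = (1/β_S + 2) (h + γ_s(r))`. -/
def aS (βS h r : ℝ) : ℝ := (1 / βS + 2) * (h + gam r)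

/-- The cubic `Φ(r,t) = P₁(r) t + P₂(r) t² + P₃(r) t³` of the slip case. -/
def Phi (βS βΩ h r t : ℝ) : ℝ :=
  6 * (2 + aS βS h r) / (12 + 4 * (aS βS h r + aP βΩ h r) + aS βS h r * aP βΩ h r) * t +
  3 * (2 + aS βS h r) * aP βΩ h r / (12 + 4 * (aS βS h r + aP βΩ h r) + aS βS h r * aP βΩ h r) * t ^ 2 +
  -(2 * (aS βS h r + aS βS h r * aP βΩ h r + aP βΩ h r)) / (12 + 4 * (aS βS h r + aP βΩ h r) + aS βS h r * aP βΩ h r) * t ^ 3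

/-- `Ψ(r,z) = Φ(r, z / (h + γ_s(r)))`. -/
def Psi (βS βΩ h r z : ℝ) : ℝ := Phi βS βΩ h r (z / (h + gam r))

/-- Partial derivative in the first (`r`) variable. -/
def dR (f : ℝ → ℝ → ℝ) : ℝ → ℝ → ℝ := fun r z => deriv (fun r' => f r' z) r

/-- Partial derivative in the second (`z`) variable. -/
def dZ (f : ℝ → ℝ → ℝ) : ℝ → ℝ → ℝ := fun r z => deriv (fun z' => f r z') z

/-- `r(x) = √(x₁² + x₂²)`. -/
def rad (x : ℝ × ℝ × ℝ) : ℝ := Real.sqrt (x.1 ^ 2 + x.2.1 ^ 2)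

/-- The cusp region `Ω_{h,δ} = {x : 0 < x₃ < h + γ_s(r), r < δ}`. -/
def Omg (h δ : ℝ) : Set (ℝ × ℝ × ℝ) :=
  {x | 0 < x.2.2 ∧ x.2.2 < h + gam (rad x) ∧ rad x < δ}

/-- First component of the test field `φ̃_h`. -/
def tphi1 (βS βΩ h : ℝ) (x : ℝ × ℝ × ℝ) : ℝ :=
  1 / 2 * (-x.1 * dZ (Psi βS βΩ h) (rad x) x.2.2)

/-- Second component of the test field `φ̃_h`. -/
def tphi2 (βS βΩ h : ℝ) (x : ℝ × ℝ × ℝ) : ℝ :=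
  1 / 2 * (-x.2.1 * dZ (Psi βS βΩ h) (rad x) x.2.2)

/-- Third component of the test field `φ̃_h`: `(1/(2r)) ∂_r[r² Ψ(r,z)]` at `z = x₃`. -/
def tphi3 (βS βΩ h : ℝ) (x : ℝ × ℝ × ℝ) : ℝ :=
  1 / 2 * (1 / rad x * deriv (fun r' => r' ^ 2 * Psi βS βΩ h r' x.2.2) (rad x))

/-- Partial derivative `∂₁` of a function on `ℝ³`. -/
def p1 (f : ℝ × ℝ × ℝ → ℝ) (x : ℝ × ℝ × ℝ) : ℝ := deriv (fun s => f (s, x.2.1, x.2.2)) x.1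

/-- Partial derivative `∂₂` of a function on `ℝ³`. -/
def p2 (f : ℝ × ℝ × ℝ → ℝ) (x : ℝ × ℝ × ℝ) : ℝ := deriv (fun s => f (x.1, s, x.2.2)) x.2.1

/-- Partial derivative `∂₃` of a function on `ℝ³`. -/
def p3 (f : ℝ × ℝ × ℝ → ℝ) (x : ℝ × ℝ × ℝ) : ℝ := deriv (fun s => f (x.1, x.2.1, s)) x.2.2

open Set

lemma gam_nonneg (r : ℝ) : 0 ≤ gam r := by
  have : √(1 - r ^ 2) ≤ 1 := Real.sqrt_le_one.mpr (by nlinarith [sq_nonneg r])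
  simp only [gam]; linarith

lemma gam_le_one (r : ℝ) : gam r ≤ 1 := by
  have := Real.sqrt_nonneg (1 - r ^ 2); simp only [gam]; linarith

lemma sq_le_two_mul_gam {r : ℝ} (hr : r ^ 2 ≤ 1) : r ^ 2 ≤ 2 * gam r := by
  have hs : √(1 - r ^ 2) ^ 2 = 1 - r ^ 2 := Real.sq_sqrt (by linarith)
  have : √(1 - r ^ 2) ≤ 1 - r ^ 2 / 2 := by nlinarith [sq_nonneg (√(1 - r ^ 2) - 1)]
  simp only [gam]; linarith

lemma hasDerivAt_gam {r : ℝ} (hr : r ^ 2 < 1) : HasDerivAt gam (r / √(1 - r ^ 2)) r := by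
  have hpos : 0 < 1 - r ^ 2 := by linarith
  have h := ((Real.hasDerivAt_sqrt hpos.ne').comp r
    ((hasDerivAt_pow 2 r).const_sub 1)).const_sub 1
  refine h.congr_deriv ?_
  field_simp
  ring

lemma div_sqrt_one_sub_sq_le {r : ℝ} (hr0 : 0 ≤ r) (hr : r ^ 2 ≤ 3 / 4) :
    r / √(1 - r ^ 2) ≤ 2 * r := by
  have hs : 1 / 2 ≤ √(1 - r ^ 2) :=
    Real.le_sqrt_of_sq_le (by linarith)
  rw [div_le_iff₀ (by linarith)]
  nlinarith

lemma continuous_gam : Continuous gam := by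
  unfold gam; fun_prop

lemma continuous_rad : Continuous rad := by
  unfold rad; fun_prop

lemma rad_sq (x : ℝ × ℝ × ℝ) : rad x ^ 2 = x.1 ^ 2 + x.2.1 ^ 2 :=
  Real.sq_sqrt (by positivity)

def slipDenom (βS βΩ A : ℝ) : ℝ :=
  12 + 4 * ((1 / βS + 2) * A + A / βΩ) + (1 / βS + 2) * A * (A / βΩ)

/-- `Φ` as a function of `(A, t)` with `A = h + γ_s(r)`. -/
def slipCubic (βS βΩ : ℝ) (p : ℝ × ℝ) : ℝ :=
  6 * (2 + (1 / βS + 2) * p.1) / slipDenom βS βΩ p.1 * p.2 +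
  3 * (2 + (1 / βS + 2) * p.1) * (p.1 / βΩ) / slipDenom βS βΩ p.1 * p.2 ^ 2 +
  -(2 * ((1 / βS + 2) * p.1 + (1 / βS + 2) * p.1 * (p.1 / βΩ) + p.1 / βΩ)) /
    slipDenom βS βΩ p.1 * p.2 ^ 3

def rescale (a z : ℝ) : ℝ × ℝ := (a, z / a)

lemma Psi_eq_slipCubic (βS βΩ h r z : ℝ) :
    Psi βS βΩ h r z = slipCubic βS βΩ (rescale (h + gam r) z) := rfl

lemma twelve_le_slipDenom {βS βΩ A : ℝ} (hβS : 0 < βS) (hβΩ : 0 < βΩ) (hA : 0 ≤ A) :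
    12 ≤ slipDenom βS βΩ A := by
  have : 0 ≤ 4 * ((1 / βS + 2) * A + A / βΩ) + (1 / βS + 2) * A * (A / βΩ) := by positivity
  unfold slipDenom; linarith

lemma contDiffOn_slipCubic (βS βΩ : ℝ) :
    ContDiffOn ℝ 1 (slipCubic βS βΩ) {p | slipDenom βS βΩ p.1 ≠ 0} := by
  unfold slipCubic slipDenom
  fun_prop (disch := exact fun _ h => h)

lemma isOpen_setOf_slipDenom_ne_zero (βS βΩ : ℝ) : IsOpen {p : ℝ × ℝ | slipDenom βS βΩ p.1 ≠ 0} :=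
  isOpen_ne_fun (by unfold slipDenom; fun_prop) continuous_const

theorem ContDiffOn.exists_bound_fderiv {E F : Type*} [NormedAddCommGroup E] [NormedSpace ℝ E]
    [NormedAddCommGroup F] [NormedSpace ℝ F] {f : E → F} {U K : Set E}
    (hf : ContDiffOn ℝ 1 f U) (hU : IsOpen U) (hK : IsCompact K) (hKU : K ⊆ U) :
    ∃ M, 0 < M ∧ ∀ p ∈ K, ‖f p‖ ≤ M ∧ HasFDerivAt f (fderiv ℝ f p) p ∧ ‖fderiv ℝ f p‖ ≤ M := by
  obtain ⟨M₀, hM₀⟩ := hK.exists_bound_of_continuousOn (hf.continuousOn.mono hKU)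
  obtain ⟨M₁, hM₁⟩ := hK.exists_bound_of_continuousOn
    ((hf.continuousOn_fderiv_of_isOpen hU le_rfl).mono hKU)
  refine ⟨max (max M₀ M₁) 1, by positivity, fun p hp => ⟨?_, ?_, ?_⟩⟩
  · exact (hM₀ p hp).trans ((le_max_left _ _).trans (le_max_left _ _))
  · exact ((hf.differentiableOn one_ne_zero p (hKU hp)).differentiableAt
      (hU.mem_nhds (hKU hp))).hasFDerivAt
  · exact (hM₁ p hp).trans ((le_max_right _ _).trans (le_max_left _ _))

def BoundsSlipCubic (βS βΩ M : ℝ) : Prop :=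
  ∀ p ∈ Icc (0 : ℝ) 2 ×ˢ Icc (0 : ℝ) 1, |slipCubic βS βΩ p| ≤ M ∧
    HasFDerivAt (slipCubic βS βΩ) (fderiv ℝ (slipCubic βS βΩ) p) p ∧
    ‖fderiv ℝ (slipCubic βS βΩ) p‖ ≤ M

lemma exists_bound_slipCubic {βS βΩ : ℝ} (hβS : 0 < βS) (hβΩ : 0 < βΩ) :
    ∃ M, 0 < M ∧ BoundsSlipCubic βS βΩ M :=
  (contDiffOn_slipCubic βS βΩ).exists_bound_fderiv (isOpen_setOf_slipDenom_ne_zero βS βΩ)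
    (isCompact_Icc.prod isCompact_Icc)
    fun p hp => (lt_of_lt_of_le (by norm_num) (twelve_le_slipDenom hβS hβΩ hp.1.1)).ne'

lemma hasDerivAt_rescale_right (a z : ℝ) : HasDerivAt (rescale a) (0, 1 / a) z :=
  (hasDerivAt_const z a).prodMk ((hasDerivAt_id z).div_const a)

lemma HasDerivAt.rescale_left {a : ℝ → ℝ} {a' r : ℝ} (ha : HasDerivAt a a' r) (ha0 : a r ≠ 0)
    (z : ℝ) : HasDerivAt (fun r => rescale (a r) z) (a', -(z * a') / a r ^ 2) r := by
  refine ha.prodMk (((hasDerivAt_const r z).div ha ha0).congr_deriv ?_)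
  ring

lemma hasDerivAt_Psi {βS βΩ h r z : ℝ} {L : ℝ × ℝ →L[ℝ] ℝ}
    (hL : HasFDerivAt (slipCubic βS βΩ) L (rescale (h + gam r) z)) :
    HasDerivAt (Psi βS βΩ h r) (L (0, 1 / (h + gam r))) z :=
  hL.comp_hasDerivAt z (hasDerivAt_rescale_right _ z)

lemma hasDerivAt_sq_mul_Psi {βS βΩ h r z : ℝ} {L : ℝ × ℝ →L[ℝ] ℝ} (hr : r ^ 2 < 1)
    (hA : h + gam r ≠ 0) (hL : HasFDerivAt (slipCubic βS βΩ) L (rescale (h + gam r) z)) :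
    HasDerivAt (fun r' => r' ^ 2 * Psi βS βΩ h r' z)
      (2 * r * Psi βS βΩ h r z + r ^ 2 *
        L (r / √(1 - r ^ 2), -(z * (r / √(1 - r ^ 2))) / (h + gam r) ^ 2)) r := by
  have hΨ : HasDerivAt (fun r' => Psi βS βΩ h r' z)
      (L (r / √(1 - r ^ 2), -(z * (r / √(1 - r ^ 2))) / (h + gam r) ^ 2)) r :=
    hL.comp_hasDerivAt (l := slipCubic βS βΩ) r
      (((hasDerivAt_gam hr).const_add h).rescale_left hA z)
  refine ((hasDerivAt_pow 2 r).mul hΨ).congr_deriv ?_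
  ring

lemma rescale_mem_Icc_prod_Icc {h r z : ℝ} (hh1 : h ≤ 1) (hz0 : 0 < z)
    (hz : z < h + gam r) : rescale (h + gam r) z ∈ Icc (0 : ℝ) 2 ×ˢ Icc (0 : ℝ) 1 := by
  have hA : 0 < h + gam r := hz0.trans hz
  exact ⟨⟨hA.le, show h + gam r ≤ 2 by linarith [gam_le_one r]⟩, div_nonneg hz0.le hA.le,
    (div_le_one hA).mpr hz.le⟩

lemma mul_norm_deriv_rescale_le {h r z : ℝ} (hh : 0 ≤ h) (hr0 : 0 ≤ r) (hr : r ≤ 1 / 2)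
    (hz0 : 0 < z) (hz : z < h + gam r) :
    r * ‖(r / √(1 - r ^ 2), -(z * (r / √(1 - r ^ 2))) / (h + gam r) ^ 2)‖ ≤ 4 := by
  set A := h + gam r
  set g := r / √(1 - r ^ 2)
  have hr2 : r ^ 2 ≤ 1 / 4 := by nlinarith
  have hA : 0 < A := hz0.trans hz
  have hrA : r ^ 2 ≤ 2 * A := by linarith [sq_le_two_mul_gam (r := r) (by linarith)]
  have hg0 : 0 ≤ g := div_nonneg hr0 (Real.sqrt_nonneg _)
  have hg : g ≤ 2 * r := div_sqrt_one_sub_sq_le hr0 (by linarith)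
  have h₁ : r * ‖g‖ ≤ 4 := by rw [Real.norm_of_nonneg hg0]; nlinarith
  have h₂ : r * ‖-(z * g) / A ^ 2‖ ≤ 4 := by
    rw [norm_div, norm_neg, norm_mul, norm_pow, Real.norm_of_nonneg hz0.le,
      Real.norm_of_nonneg hg0, Real.norm_of_nonneg hA.le]
    calc r * (z * g / A ^ 2) ≤ r * (A * (2 * r) / A ^ 2) := by gcongr
      _ = 2 * r ^ 2 / A := by field_simp
      _ ≤ 4 := by rw [div_le_iff₀ hA]; linarith
  rw [Prod.norm_def, mul_max_of_nonneg _ _ hr0]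
  exact max_le h₁ h₂

section Bounds

variable {βS βΩ M h δ : ℝ}

lemma abs_dZ_Psi_le
    (hM : BoundsSlipCubic βS βΩ M)
    (hh1 : h ≤ 1) {r z : ℝ} (hz0 : 0 < z) (hz : z < h + gam r) :
    |dZ (Psi βS βΩ h) r z| ≤ M / (h + gam r) := by
  obtain ⟨-, hL, hLM⟩ := hM _ (rescale_mem_Icc_prod_Icc hh1 hz0 hz)
  have hA : 0 < h + gam r := hz0.trans hz
  rw [dZ, (hasDerivAt_Psi hL).deriv, ← Real.norm_eq_abs]
  calc _ ≤ ‖fderiv ℝ (slipCubic βS βΩ) (rescale (h + gam r) z)‖ * ‖((0 : ℝ), 1 / (h + gam r))‖ :=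
        ContinuousLinearMap.le_opNorm _ _
    _ ≤ M * (1 / (h + gam r)) := by
        rw [Prod.norm_def, norm_zero, Real.norm_of_nonneg (by positivity),
          max_eq_right (by positivity)]
        gcongr
    _ = M / (h + gam r) := mul_one_div _ _

lemma abs_tphi3_le
    (hM : BoundsSlipCubic βS βΩ M)
    (hh : 0 ≤ h) (hh1 : h ≤ 1) (hδ : δ ≤ 1 / 2) {x : ℝ × ℝ × ℝ} (hx : x ∈ Omg h δ) :
    |tphi3 βS βΩ h x| ≤ 3 * M := by
  obtain ⟨hz0, hz, hrδ⟩ := hx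
  set r := rad x
  set z := x.2.2
  have hr0 : 0 ≤ r := Real.sqrt_nonneg _
  have hA : 0 < h + gam r := hz0.trans hz
  obtain ⟨hΨ, hL, hLM⟩ := hM _ (rescale_mem_Icc_prod_Icc hh1 hz0 hz)
  have hM0 : 0 ≤ M := (abs_nonneg _).trans hΨ
  rcases hr0.eq_or_lt with hr | hr
  · -- on the axis `1 / rad x = 0`, so `tphi3 x = 0`
    have hr' : rad x = 0 := hr.symm
    simp [tphi3, hr', hM0]
  set v := (r / √(1 - r ^ 2), -(z * (r / √(1 - r ^ 2))) / (h + gam r) ^ 2)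
  have hv : r * ‖v‖ ≤ 4 := mul_norm_deriv_rescale_le hh hr0 (by linarith) hz0 hz
  have htphi3 : tphi3 βS βΩ h x =
      Psi βS βΩ h r z + r / 2 * fderiv ℝ (slipCubic βS βΩ) (rescale (h + gam r) z) v := by
    have hd : deriv (fun r' => r' ^ 2 * Psi βS βΩ h r' z) r = 2 * r * Psi βS βΩ h r z +
        r ^ 2 * fderiv ℝ (slipCubic βS βΩ) (rescale (h + gam r) z) v :=
      (hasDerivAt_sq_mul_Psi (by nlinarith) hA.ne' hL).deriv
    change 1 / 2 * (1 / r * deriv (fun r' => r' ^ 2 * Psi βS βΩ h r' z) r) = _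
    rw [hd]
    field_simp
  have hLv : r * |fderiv ℝ (slipCubic βS βΩ) (rescale (h + gam r) z) v| ≤ 4 * M := by
    rw [← Real.norm_eq_abs]
    calc _ ≤ r * (M * ‖v‖) := by
          gcongr
          exact (ContinuousLinearMap.le_opNorm _ _).trans (by gcongr)
      _ = M * (r * ‖v‖) := by ring
      _ ≤ M * 4 := by gcongr
      _ = 4 * M := mul_comm _ _
  rw [htphi3, Psi_eq_slipCubic]
  calc _ ≤ |slipCubic βS βΩ (rescale (h + gam r) z)| +
        |r / 2 * fderiv ℝ (slipCubic βS βΩ) (rescale (h + gam r) z) v| := abs_add_le _ _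
    _ = |slipCubic βS βΩ (rescale (h + gam r) z)| +
        r * |fderiv ℝ (slipCubic βS βΩ) (rescale (h + gam r) z) v| / 2 := by
        rw [abs_mul, abs_of_nonneg (by linarith : 0 ≤ r / 2)]
        ring
    _ ≤ 3 * M := by linarith

lemma tphi_sq_sum_le
    (hM : BoundsSlipCubic βS βΩ M)
    (hh : 0 ≤ h) (hh1 : h ≤ 1) (hδ : δ ≤ 1 / 2) {x : ℝ × ℝ × ℝ} (hx : x ∈ Omg h δ) :
    tphi1 βS βΩ h x ^ 2 + tphi2 βS βΩ h x ^ 2 + tphi3 βS βΩ h x ^ 2 ≤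
      19 * M ^ 2 / (h + gam (rad x)) := by
  set r := rad x
  set A := h + gam r
  have hA : 0 < A := hx.1.trans hx.2.1
  have hA2 : A ≤ 2 := by linarith [gam_le_one r]
  have hrA : r ^ 2 ≤ 2 * A := by
    have hr0 : 0 ≤ r := Real.sqrt_nonneg _
    have : r ^ 2 ≤ 1 := by nlinarith [hx.2.2]
    linarith [sq_le_two_mul_gam this]
  have h12 : tphi1 βS βΩ h x ^ 2 + tphi2 βS βΩ h x ^ 2 =
      r ^ 2 / 4 * dZ (Psi βS βΩ h) r x.2.2 ^ 2 := by
    simp only [tphi1, tphi2, r, rad_sq]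
    ring
  have hdZ : dZ (Psi βS βΩ h) r x.2.2 ^ 2 ≤ (M / A) ^ 2 := by
    rw [← sq_abs]
    exact pow_le_pow_left₀ (abs_nonneg _) (abs_dZ_Psi_le hM hh1 hx.1 hx.2.1) 2
  have h3 : tphi3 βS βΩ h x ^ 2 ≤ (3 * M) ^ 2 := by
    rw [← sq_abs]
    exact pow_le_pow_left₀ (abs_nonneg _) (abs_tphi3_le hM hh hh1 hδ hx) 2
  rw [h12]
  calc _ ≤ 2 * A / 4 * (M / A) ^ 2 + (3 * M) ^ 2 := by gcongr
    _ = M ^ 2 / (2 * A) + 9 * M ^ 2 := by field_simp; ring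
    _ ≤ 19 * M ^ 2 / A := by
        rw [div_add' _ _ _ (by positivity), div_le_div_iff₀ (by positivity) hA]
        nlinarith [mul_nonneg (mul_nonneg (sq_nonneg M) hA.le) (sub_nonneg.2 hA2)]

end Bounds


theorem setLIntegral_regionBetween_ofReal_div {α : Type*} [MeasurableSpace α] (μ : Measure α)
    [SFinite μ] {S : Set α} (hS : MeasurableSet S) {a : α → ℝ} (ha : Measurable a)
    (ha0 : ∀ y ∈ S, 0 < a y) (c : ℝ) :
    ∫⁻ q in regionBetween 0 a S, ENNReal.ofReal (c / a q.1) ∂μ.prod volume =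
      ENNReal.ofReal c * μ S := by
  have hmeas : MeasurableSet (regionBetween 0 a S) :=
    measurableSet_regionBetween measurable_const ha hS
  have hind : Measurable ((regionBetween 0 a S).indicator fun q => ENNReal.ofReal (c / a q.1)) :=
    (measurable_const.div (ha.comp measurable_fst)).ennreal_ofReal.indicator hmeas
  have hfiber : ∀ y, ∫⁻ t, (regionBetween 0 a S).indicator
      (fun q => ENNReal.ofReal (c / a q.1)) (y, t) = S.indicator (fun _ => ENNReal.ofReal c) y := by
    intro y
    by_cases hy : y ∈ S
    · have hslice : (fun t => (regionBetween 0 a S).indicator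
          (fun q => ENNReal.ofReal (c / a q.1)) (y, t)) =
          (Ioo 0 (a y)).indicator fun _ => ENNReal.ofReal (c / a y) := by
        ext t
        simp [indicator, regionBetween, hy]
      rw [hslice, lintegral_indicator_const measurableSet_Ioo, Real.volume_Ioo,
        ← ENNReal.ofReal_mul' (by linarith [ha0 y hy]), indicator_of_mem hy, sub_zero,
        div_mul_cancel₀ _ (ha0 y hy).ne']
    · simp [indicator, regionBetween, hy]
  rw [← lintegral_indicator hmeas, lintegral_prod _ hind.aemeasurable]
  simp_rw [hfiber]
  rw [lintegral_indicator_const hS]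

lemma setLIntegral_Omg_ofReal_div {h : ℝ} (hh : 0 < h) (δ c : ℝ) :
    ∫⁻ x in Omg h δ, ENNReal.ofReal (c / (h + gam (rad x))) =
      ENNReal.ofReal c * volume {y : ℝ × ℝ | √(y.1 ^ 2 + y.2 ^ 2) < δ} := by
  set S := {y : ℝ × ℝ | √(y.1 ^ 2 + y.2 ^ 2) < δ}
  set a := fun y : ℝ × ℝ => h + gam √(y.1 ^ 2 + y.2 ^ 2)
  have hpre : MeasurableEquiv.prodAssoc ⁻¹' Omg h δ = regionBetween 0 a S := by
    ext q
    simp only [mem_preimage, Omg, regionBetween, mem_ofPred_eq, mem_Ioo, Pi.zero_apply]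
    tauto
  have hassoc := (measurePreserving_prodAssoc volume volume volume).setLIntegral_comp_preimage_emb
    MeasurableEquiv.prodAssoc.measurableEmbedding
    (fun x => ENNReal.ofReal (c / (h + gam (rad x)))) (Omg h δ)
  rw [hpre] at hassoc
  refine hassoc.symm.trans (setLIntegral_regionBetween_ofReal_div (volume : Measure (ℝ × ℝ))
    ?_ ?_ (fun y _ => ?_) c)
  · exact measurableSet_lt (by fun_prop) measurable_const
  · exact measurable_const.add (continuous_gam.comp (by fun_prop)).measurable
  · linarith [gam_nonneg √(y.1 ^ 2 + y.2 ^ 2)]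

lemma volume_setOf_sqrt_lt_le {δ : ℝ} (hδ : 0 ≤ δ) :
    volume {y : ℝ × ℝ | √(y.1 ^ 2 + y.2 ^ 2) < δ} ≤ ENNReal.ofReal (4 * δ ^ 2) := by
  have hsub : {y : ℝ × ℝ | √(y.1 ^ 2 + y.2 ^ 2) < δ} ⊆ Ioo (-δ) δ ×ˢ Ioo (-δ) δ := by
    intro y hy
    have h₁ : |y.1| < δ := (Real.abs_le_sqrt (by nlinarith [sq_nonneg y.2])).trans_lt hy
    have h₂ : |y.2| < δ := (Real.abs_le_sqrt (by nlinarith [sq_nonneg y.1])).trans_lt hy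
    exact ⟨abs_lt.mp h₁, abs_lt.mp h₂⟩
  calc _ ≤ volume (Ioo (-δ) δ ×ˢ Ioo (-δ) δ) := measure_mono hsub
    _ = ENNReal.ofReal (4 * δ ^ 2) := by
        rw [Measure.volume_eq_prod, Measure.prod_prod, Real.volume_Ioo,
          ← ENNReal.ofReal_mul (by linarith)]
        ring_nf

lemma setIntegral_Omg_le {G : ℝ × ℝ × ℝ → ℝ} {c h δ : ℝ} (hh : 0 < h) (hδ : 0 ≤ δ) (hc : 0 ≤ c)
    (hG : ∀ x ∈ Omg h δ, ‖G x‖ ≤ c / (h + gam (rad x))) :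
    ∫ x in Omg h δ, G x ≤ 4 * δ ^ 2 * c := by
  have hlin : ∫⁻ x in Omg h δ, ENNReal.ofReal ‖G x‖ ≤ ENNReal.ofReal (4 * δ ^ 2 * c) :=
    calc _ ≤ ∫⁻ x in Omg h δ, ENNReal.ofReal (c / (h + gam (rad x))) :=
          setLIntegral_mono (measurable_const.div (measurable_const.add
            (continuous_gam.comp continuous_rad).measurable)).ennreal_ofReal
            fun x hx => ENNReal.ofReal_le_ofReal (hG x hx)
      _ ≤ ENNReal.ofReal c * ENNReal.ofReal (4 * δ ^ 2) := by
          rw [setLIntegral_Omg_ofReal_div hh]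
          gcongr
          exact volume_setOf_sqrt_lt_le hδ
      _ = ENNReal.ofReal (4 * δ ^ 2 * c) := by rw [← ENNReal.ofReal_mul hc, mul_comm]
  calc _ ≤ ‖∫ x in Omg h δ, G x‖ := Real.le_norm_self _
    _ ≤ (∫⁻ x in Omg h δ, ENNReal.ofReal ‖G x‖).toReal := norm_integral_le_lintegral_norm _
    _ ≤ 4 * δ ^ 2 * c :=
        ENNReal.toReal_le_of_le_ofReal (by positivity) hlin

/-- Estimate (A.8)/(3.20) (slip case): the `L²(Ω_{h,δ})` norm of the test field `φ̃_h`
is bounded uniformly in `h`. -/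
theorem tphi_L2_bound (δ βS βΩ : ℝ) (hδ : δ ∈ Set.Ioo (0 : ℝ) (1 / 4))
    (hβS : 0 < βS) (hβΩ : 0 < βΩ) :
    ∃ C : ℝ, 0 < C ∧ ∀ h ∈ Set.Ioo (0 : ℝ) (1 / 4),
      (∫ x in Omg h δ,
          (tphi1 βS βΩ h x) ^ 2 + (tphi2 βS βΩ h x) ^ 2 + (tphi3 βS βΩ h x) ^ 2) ≤
        C ^ 2 := by
  obtain ⟨M, hM0, hM⟩ := exists_bound_slipCubic hβS hβΩ
  refine ⟨9 * δ * M, by have := hδ.1; positivity, fun h hh => ?_⟩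
  calc _ ≤ 4 * δ ^ 2 * (19 * M ^ 2) := setIntegral_Omg_le hh.1 hδ.1.le (by positivity)
        fun x hx => by
          rw [Real.norm_of_nonneg (by positivity)]
          exact tphi_sq_sum_le hM hh.1.le (by linarith [hh.2]) (by linarith [hδ.2]) hx
    _ ≤ (9 * δ * M) ^ 2 := by nlinarith [sq_nonneg (δ * M)]
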